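/- For the Finsler space with F = e^{−x1}(y2³ + e^{−x1 x3} y3 y1²)^{1/3} on {y1 ≠ 0}, the Lie bracket of X = h₁ + (y2/y1)h₂ and Y = h₃ equals −(y1/2)∂/∂y1 + y3 ∂/∂y3, a vertical vector field; hence the nullity distribution N_{P̊} of the Berwald hv-curvature, spanned by X and Y, is not completely integrable. -/

import Mathlib

open scoped BigOperators

/-- The phase space `ℝ³ × ℝ³` with coordinates `(x, y)`. -/
abbrev E : Type := (Fin 3 → ℝ) × (Fin 3 → ℝ)

/-- The Lie bracket of two vector fields on `E`. -/
noncomputable def lieB (X Y : E → E) (z : E) : E :=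
  fderiv ℝ Y z (X z) - fderiv ℝ X z (Y z)

/-- The Barthel connection coefficients `N^i_j` of
`F = e^{−x1}(y2³ + e^{−x1x3} y3 y1²)^{1/3}`. -/
noncomputable def NN (x y : Fin 3 → ℝ) : Fin 3 → Fin 3 → ℝ := fun i j =>
  (!![-(1 / 2) * (3 + x 2) * y 0, 0, 0;
      -(3 / 4) * y 1, -(3 / 4) * y 0, 0;
      -(3 / 4) * (y 1) ^ 3 * Real.exp ((x 0) * (x 2)) / (y 0) ^ 2,
        (9 / 4) * (y 1) ^ 2 * Real.exp ((x 0) * (x 2)) / (y 0),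
        -(y 2) * (x 0)] : Matrix (Fin 3) (Fin 3) ℝ) i j

/-- The horizontal frame `h_i = ∂/∂x^i − N^j_i ∂/∂y^j` of the Barthel connection. -/
noncomputable def hh (i : Fin 3) : E → E := fun z =>
  (Pi.single i 1, fun j => -NN z.1 z.2 j i)

/-- The nullity vector field `X = h₁ + (y2/y1) h₂`. -/
noncomputable def Xf : E → E := fun z => hh 0 z + (z.2 1 / z.2 0) • hh 1 z


/-!
In coordinates `h₃ = ∂/∂x³ + x¹y³ ∂/∂y³`, and on `{y¹ ≠ 0}`
`X = ∂/∂x¹ + (y²/y¹) ∂/∂x² + ½(3 + x³)y¹ ∂/∂y¹ + (3/2)y² ∂/∂y²`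
  `− (3/2)(y²)³e^{x¹x³}/(y¹)² ∂/∂y³`.
Differentiating these explicit fields gives the bracket; the `∂/∂y³`-terms `x¹ X(y³)` and
`h₃(X^{y³})` cancel, leaving `−(y¹/2) ∂/∂y¹ + y³ ∂/∂y³`. The horizontal parts of `X` and `h₃`
are linearly independent, so the only vertical vector in their span is `0`, whereas the bracket
has `∂/∂y¹`-component `−y¹/2 ≠ 0`.
-/

open Filter Topology

lemma Prod.eq_zero_of_mem_span_pair_of_fst_eq_zero {R M N : Type*} [Ring R] [AddCommGroup M]
    [Module R M] [AddCommGroup N] [Module R N] {u w v : M × N}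
    (hlin : LinearIndependent R ![u.1, w.1]) (hv : v ∈ Submodule.span R {u, w})
    (hv₁ : v.1 = 0) : v = 0 := by
  obtain ⟨a, b, rfl⟩ := Submodule.mem_span_pair.mp hv
  obtain ⟨rfl, rfl⟩ := LinearIndependent.pair_iff.mp hlin a b (by simpa using hv₁)
  simp

lemma lieB_congr_of_eventuallyEq {X X' Y Y' : E → E} {z : E} (hX : X =ᶠ[𝓝 z] X')
    (hY : Y =ᶠ[𝓝 z] Y') : lieB X Y z = lieB X' Y' z := by
  simp only [lieB, hX.fderiv_eq, hY.fderiv_eq, hX.eq_of_nhds, hY.eq_of_nhds]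

lemma hasFDerivAt_vec3 {𝕜 F : Type*} [NontriviallyNormedField 𝕜] [NormedAddCommGroup F]
    [NormedSpace 𝕜 F] {f₀ f₁ f₂ : F → 𝕜} {L₀ L₁ L₂ : F →L[𝕜] 𝕜} {z : F}
    (h₀ : HasFDerivAt f₀ L₀ z) (h₁ : HasFDerivAt f₁ L₁ z) (h₂ : HasFDerivAt f₂ L₂ z) :
    HasFDerivAt (fun w => ![f₀ w, f₁ w, f₂ w]) (ContinuousLinearMap.pi ![L₀, L₁, L₂]) z := by
  have h := (hasFDerivAt_pi (φ := ![f₀, f₁, f₂]) (φ' := ![L₀, L₁, L₂]) (x := z)).mpr fun i => by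
    fin_cases i <;> assumption
  convert h using 2 with w
  ext i; fin_cases i <;> rfl

lemma hasFDerivAt_fst_apply (i : Fin 3) (z : E) : HasFDerivAt (fun w : E => w.1 i)
    ((ContinuousLinearMap.proj i).comp (ContinuousLinearMap.fst ℝ _ _)) z :=
  ((ContinuousLinearMap.proj i).comp
    (ContinuousLinearMap.fst ℝ (Fin 3 → ℝ) (Fin 3 → ℝ))).hasFDerivAt

lemma hasFDerivAt_snd_apply (i : Fin 3) (z : E) : HasFDerivAt (fun w : E => w.2 i)
    ((ContinuousLinearMap.proj i).comp (ContinuousLinearMap.snd ℝ _ _)) z :=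
  ((ContinuousLinearMap.proj i).comp
    (ContinuousLinearMap.snd ℝ (Fin 3 → ℝ) (Fin 3 → ℝ))).hasFDerivAt

open Real

noncomputable def Ycoord : E → E := fun w => (![0, 0, 1], ![0, 0, w.2 2 * w.1 0])

noncomputable def Xcoord : E → E := fun w =>
  (![1, w.2 1 * (w.2 0)⁻¹, 0],
   ![(3 + w.1 2) * w.2 0 / 2, 3 / 2 * w.2 1,
     -(3 / 2) * w.2 1 ^ 3 * exp (w.1 0 * w.1 2) * ((w.2 0)⁻¹) ^ 2])

lemma hh_two_eq_Ycoord : hh 2 = Ycoord := by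
  funext w
  refine Prod.ext ?_ ?_ <;> funext j <;> fin_cases j <;> simp [hh, Ycoord, NN]

lemma Xf_eq_Xcoord {w : E} (hw : w.2 0 ≠ 0) : Xf w = Xcoord w := by
  refine Prod.ext ?_ ?_ <;> funext j <;> fin_cases j <;>
    simp [Xf, hh, Xcoord, NN] <;> field_simp <;> ring

lemma Xf_eventuallyEq_Xcoord {z : E} (hz : z.2 0 ≠ 0) : Xf =ᶠ[𝓝 z] Xcoord := by
  have hopen : IsOpen {w : E | w.2 0 ≠ 0} :=
    isOpen_ne_fun (by fun_prop) continuous_const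
  filter_upwards [hopen.mem_nhds hz] with w hw using Xf_eq_Xcoord hw

lemma fderiv_Ycoord_apply (z v : E) :
    fderiv ℝ Ycoord z v = (0, ![0, 0, v.2 2 * z.1 0 + z.2 2 * v.1 0]) := by
  have hY : HasFDerivAt Ycoord _ z := (hasFDerivAt_const _ z).prodMk
    (hasFDerivAt_vec3 (hasFDerivAt_const 0 z) (hasFDerivAt_const 0 z)
      ((hasFDerivAt_snd_apply 2 z).mul (hasFDerivAt_fst_apply 0 z)))
  rw [hY.fderiv]
  refine Prod.ext ?_ ?_ <;> funext j <;> fin_cases j <;> simp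
  ring

lemma fderiv_Xcoord_apply_Ycoord {z : E} (hz : z.2 0 ≠ 0) :
    fderiv ℝ Xcoord z (Ycoord z) = (0, ![z.2 0 / 2, 0,
      -(3 / 2) * z.1 0 * z.2 1 ^ 3 * exp (z.1 0 * z.1 2) / z.2 0 ^ 2]) := by
  have hinv := (hasDerivAt_inv hz).comp_hasFDerivAt z (hasFDerivAt_snd_apply 0 z)
  have hX : HasFDerivAt Xcoord _ z :=
    (hasFDerivAt_vec3 (hasFDerivAt_const _ z) ((hasFDerivAt_snd_apply 1 z).mul hinv)
      (hasFDerivAt_const _ z)).prodMk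
    (hasFDerivAt_vec3
      ((((hasFDerivAt_fst_apply 2 z).const_add 3).mul (hasFDerivAt_snd_apply 0 z)).mul_const _)
      ((hasFDerivAt_snd_apply 1 z).const_mul _)
      (((((hasFDerivAt_snd_apply 1 z).pow 3).const_mul _).mul
        ((hasFDerivAt_fst_apply 0 z).mul (hasFDerivAt_fst_apply 2 z)).exp).mul (hinv.pow 2)))
  rw [hX.fderiv]
  refine Prod.ext ?_ ?_ <;> funext j <;> fin_cases j <;> simp [Ycoord] <;> field_simp

lemma lieB_Xf_hh_two {z : E} (hz : z.2 0 ≠ 0) :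
    lieB Xf (hh 2) z = (0, ![-(z.2 0) / 2, 0, z.2 2]) := by
  rw [hh_two_eq_Ycoord, lieB_congr_of_eventuallyEq (Xf_eventuallyEq_Xcoord hz) EventuallyEq.rfl,
    lieB, fderiv_Ycoord_apply, fderiv_Xcoord_apply_Ycoord hz]
  refine Prod.ext (by simp) ?_
  funext j; fin_cases j <;> simp [Xcoord] <;> ring

lemma linearIndependent_fst_Xf_hh_two (z : E) :
    LinearIndependent ℝ ![(Xf z).1, (hh 2 z).1] := by
  refine LinearIndependent.pair_iff.mpr fun s t hst => ⟨?_, ?_⟩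
  · simpa [Xf, hh] using congrFun hst 0
  · simpa [Xf, hh] using congrFun hst 2

/-- on `{y1 ≠ 0}`, the Lie bracket of `X = h₁ + (y2/y1)h₂` and `Y = h₃` equals
the vertical vector field `−(y1/2)∂/∂y1 + y3 ∂/∂y3`; this bracket does not lie in the span of
`X` and `Y`, so the nullity distribution `N_{P̊}` spanned by `X, Y` is not completely
integrable. -/
theorem statement8 :
    ∀ z : E, z.2 0 ≠ 0 →
      lieB Xf (hh 2) z = ((0 : Fin 3 → ℝ), ![-(z.2 0) / 2, 0, z.2 2]) ∧
      ((0 : Fin 3 → ℝ), (![-(z.2 0) / 2, 0, z.2 2] : Fin 3 → ℝ)) ∉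
        Submodule.span ℝ ({Xf z, hh 2 z} : Set E) := by
  intro z hz
  refine ⟨lieB_Xf_hh_two hz, fun hmem => hz ?_⟩
  have hzero := Prod.eq_zero_of_mem_span_pair_of_fst_eq_zero
    (linearIndependent_fst_Xf_hh_two z) hmem rfl
  simpa using congrFun (congrArg Prod.snd hzero) 0
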